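/- arXiv:0707.1404 — 3 statements merged into one kernel-verified Lean document; each statement's English description precedes it below -/
import Mathlib

section
/- Let C be a closed subcategory of Mod-B with associated preradical r and a = r(B). Then r is exact if and only if a² = a and M·a = M for every module M in C. -/
/-!
Write `a = r B`. The preradical property `(r M).map f ≤ r N` gives `a • M ≤ r M` for every
`M`, and `r` of a free module is `a` times it. If `r` is exact, then for `M` in `C` the
surjection from a free module onto `M` shows `M = r M = a • M`; applied to the module
`a / a²`, which lies in `C` and is killed by `a`, this forces `a² = a`. Conversely, if
`a • M = M` on `C`, then for a surjection `f : M → N` we get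
`r N = a • r N ≤ a • N = f (a • M) ≤ f (r M)`.
-/

universe u

open DirectSum

structure ClosedSubcategory (B : Type u) [Ring B] : Type (u + 1) where
  Mem : ∀ (M : Type u) [AddCommGroup M] [Module B M], Prop
  mem_congr : ∀ {M N : Type u} [AddCommGroup M] [Module B M] [AddCommGroup N] [Module B N],
    (M ≃ₗ[B] N) → Mem M → Mem N
  mem_submodule : ∀ {M : Type u} [AddCommGroup M] [Module B M] (N : Submodule B M),
    Mem M → Mem N
  mem_quotient : ∀ {M : Type u} [AddCommGroup M] [Module B M] (N : Submodule B M),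
    Mem M → Mem (M ⧸ N)
  mem_directSum : ∀ {ι : Type u} (M : ι → Type u) [∀ i, AddCommGroup (M i)]
    [∀ i, Module B (M i)], (∀ i, Mem (M i)) → Mem (⨁ i, M i)

/-- The submodule `a•M` of `M` (the mirror of `M·a` for right modules). -/
def idealSMul {B : Type u} [Ring B] (a : Ideal B) (M : Type u) [AddCommGroup M]
    [Module B M] : Submodule B M :=
  Submodule.span B {z : M | ∃ x ∈ a, ∃ m : M, z = x • m}

namespace Submodule

theorem span_smul_set_eq_smul {R M : Type*} [Semiring R] [AddCommMonoid M] [Module R M]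
    (I : Ideal R) (N : Submodule R M) :
    span R {z : M | ∃ x ∈ I, ∃ n ∈ N, z = x • n} = I • N :=
  le_antisymm (span_le.2 fun _ ⟨_, hx, _, hn, hz⟩ ↦ hz ▸ smul_mem_smul hx hn)
    (smul_le.2 fun x hx n hn ↦ subset_span ⟨x, hx, n, hn, rfl⟩)

theorem smul_top_eq_top_of_smul_top_quotient {R M : Type*} [Ring R] [AddCommGroup M]
    [Module R M] {I : Ideal R}
    (h : I • (⊤ : Submodule R (M ⧸ I • (⊤ : Submodule R M))) = ⊤) :
    I • (⊤ : Submodule R M) = ⊤ := by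
  have hmap : map (I • (⊤ : Submodule R M)).mkQ (I • (⊤ : Submodule R M)) = ⊤ := by
    rwa [map_smul'', map_top, range_mkQ]
  simpa using (map_mkQ_eq_top _ _).1 hmap

end Submodule

theorem idealSMul_eq_smul_top {B : Type u} [Ring B] (a : Ideal B) (M : Type u) [AddCommGroup M]
    [Module B M] : idealSMul a M = a • (⊤ : Submodule B M) := by
  simp [idealSMul, ← Submodule.span_smul_set_eq_smul]

namespace ClosedSubcategory

variable {B : Type u} [Ring B]

theorem mem_map (C : ClosedSubcategory B) {M N : Type u} [AddCommGroup M] [Module B M]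
    [AddCommGroup N] [Module B N] (f : M →ₗ[B] N) {S : Submodule B M} (hS : C.Mem S) :
    C.Mem (S.map f) := by
  have hrange : C.Mem (LinearMap.range (f ∘ₗ S.subtype)) :=
    C.mem_congr (f ∘ₗ S.subtype).quotKerEquivRange (C.mem_quotient _ hS)
  rwa [LinearMap.range_comp, Submodule.range_subtype] at hrange

structure IsAssociatedPreradical (C : ClosedSubcategory B)
    (r : ∀ (M : Type u) [AddCommGroup M] [Module B M], Submodule B M) : Prop where
  mem : ∀ (M : Type u) [AddCommGroup M] [Module B M], C.Mem (r M)
  le : ∀ (M : Type u) [AddCommGroup M] [Module B M] (N : Submodule B M), C.Mem N → N ≤ r M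

def IsExactPreradical (r : ∀ (M : Type u) [AddCommGroup M] [Module B M], Submodule B M) :
    Prop :=
  ∀ (M N : Type u) [AddCommGroup M] [Module B M] [AddCommGroup N] [Module B N]
    (f : M →ₗ[B] N), Function.Surjective f → (r M).map f = r N

namespace IsAssociatedPreradical

variable {C : ClosedSubcategory B}
  {r : ∀ (M : Type u) [AddCommGroup M] [Module B M], Submodule B M}

theorem eq_top_of_mem (hr : C.IsAssociatedPreradical r) {M : Type u} [AddCommGroup M]
    [Module B M] (hM : C.Mem M) : r M = ⊤ :=
  top_le_iff.1 (hr.le M ⊤ (C.mem_congr Submodule.topEquiv.symm hM))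

theorem map_le (hr : C.IsAssociatedPreradical r) {M N : Type u} [AddCommGroup M] [Module B M]
    [AddCommGroup N] [Module B N] (f : M →ₗ[B] N) : (r M).map f ≤ r N :=
  hr.le N _ (C.mem_map f (hr.mem M))

theorem smul_top_le (hr : C.IsAssociatedPreradical r) (M : Type u) [AddCommGroup M]
    [Module B M] : r B • (⊤ : Submodule B M) ≤ r M :=
  Submodule.smul_le.2 fun x hx m _ ↦
    hr.map_le (LinearMap.toSpanSingleton B M m) ⟨x, hx, by simp⟩

theorem finsupp_le_smul_top (hr : C.IsAssociatedPreradical r) (ι : Type u) :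
    r (ι →₀ B) ≤ r B • (⊤ : Submodule B (ι →₀ B)) := by
  intro x hx
  rw [← x.sum_single]
  refine Submodule.sum_mem _ fun i _ ↦ ?_
  rw [← Finsupp.smul_single_one]
  exact Submodule.smul_mem_smul (hr.map_le (Finsupp.lapply i) ⟨x, hx, rfl⟩) Submodule.mem_top

theorem smul_top_eq_top_of_isExact (hr : C.IsAssociatedPreradical r) (hex : IsExactPreradical r)
    {M : Type u} [AddCommGroup M] [Module B M] (hM : C.Mem M) :
    r B • (⊤ : Submodule B M) = ⊤ := by
  let f := Finsupp.linearCombination B (id : M → M)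
  have hf : Function.Surjective f := Finsupp.linearCombination_id_surjective B M
  refine top_le_iff.1 ?_
  calc ⊤ = (r (M →₀ B)).map f := by rw [hex _ _ f hf, hr.eq_top_of_mem hM]
    _ ≤ (r B • (⊤ : Submodule B (M →₀ B))).map f :=
      Submodule.map_mono (hr.finsupp_le_smul_top M)
    _ ≤ r B • ⊤ := by rw [Submodule.map_smul'']; exact Submodule.smul_mono le_rfl le_top

theorem mul_self_eq_of_smul_top_eq_top (hr : C.IsAssociatedPreradical r)
    (htop : ∀ (M : Type u) [AddCommGroup M] [Module B M], C.Mem M →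
      r B • (⊤ : Submodule B M) = ⊤) :
    r B * r B = r B := by
  refine le_antisymm Submodule.smul_le_right fun x hx ↦ ?_
  have hquot := htop _ (C.mem_quotient (r B • ⊤) (hr.mem B))
  have hself : r B • (⊤ : Submodule B (r B)) = ⊤ :=
    Submodule.smul_top_eq_top_of_smul_top_quotient hquot
  exact (Submodule.mem_smul_top_iff (r B) (r B) ⟨x, hx⟩).1
    (by rw [hself]; exact Submodule.mem_top)

theorem isExactPreradical_of_smul_top_eq_top (hr : C.IsAssociatedPreradical r)
    (htop : ∀ (M : Type u) [AddCommGroup M] [Module B M], C.Mem M →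
      r B • (⊤ : Submodule B M) = ⊤) :
    IsExactPreradical r := by
  intro M N _ _ _ _ f hf
  refine le_antisymm (hr.map_le f) ?_
  have hrN : r B • r N = r N := by
    rw [← Submodule.range_subtype (r N), LinearMap.range_eq_map, ← Submodule.map_smul'',
      htop _ (hr.mem N)]
  calc r N = r B • r N := hrN.symm
    _ ≤ r B • (⊤ : Submodule B N) := Submodule.smul_mono le_rfl le_top
    _ = (r B • (⊤ : Submodule B M)).map f := by
      rw [Submodule.map_smul'', Submodule.map_top, LinearMap.range_eq_top.2 hf]
    _ ≤ (r M).map f := Submodule.map_mono (hr.smul_top_le M)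

theorem isExactPreradical_iff (hr : C.IsAssociatedPreradical r) :
    IsExactPreradical r ↔ r B * r B = r B ∧
      ∀ (M : Type u) [AddCommGroup M] [Module B M], C.Mem M →
        r B • (⊤ : Submodule B M) = ⊤ := by
  refine ⟨fun hex ↦ ?_, fun ⟨_, htop⟩ ↦ hr.isExactPreradical_of_smul_top_eq_top htop⟩
  have htop : ∀ (M : Type u) [AddCommGroup M] [Module B M], C.Mem M →
      r B • (⊤ : Submodule B M) = ⊤ := fun _ _ _ hM ↦ hr.smul_top_eq_top_of_isExact hex hM
  exact ⟨hr.mul_self_eq_of_smul_top_eq_top htop, htop⟩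

end IsAssociatedPreradical

end ClosedSubcategory

theorem stmt6 {B : Type u} [Ring B] (C : ClosedSubcategory B)
    (r : ∀ (M : Type u) [AddCommGroup M] [Module B M], Submodule B M)
    (hmem : ∀ (M : Type u) [AddCommGroup M] [Module B M], C.Mem (r M))
    (hmax : ∀ (M : Type u) [AddCommGroup M] [Module B M] (N : Submodule B M),
      C.Mem N → N ≤ r M) :
    -- `r` is exact ...
    (∀ (M N : Type u) [AddCommGroup M] [Module B M] [AddCommGroup N] [Module B N]
        (f : M →ₗ[B] N), Function.Surjective f → (r M).map f = r N) ↔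
      -- ... iff `a² = a` and `M·a = M` for every `M` in `C`.
      (Submodule.span B {z : B | ∃ u ∈ r B, ∃ v ∈ r B, z = u * v} = r B ∧
        ∀ (M : Type u) [AddCommGroup M] [Module B M], C.Mem M →
          idealSMul (r B) M = ⊤) := by
  have hsq : Submodule.span B {z : B | ∃ u ∈ r B, ∃ v ∈ r B, z = u * v} = r B * r B :=
    Submodule.span_smul_set_eq_smul (r B) (r B)
  simp only [hsq, idealSMul_eq_smul_top]
  exact ClosedSubcategory.IsAssociatedPreradical.isExactPreradical_iff ⟨hmem, hmax⟩
end

section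
/- Let r be an exact preradical on Mod-B associated to a closed subcategory C, with a = r(B) admitting a set of local units. If M ∈ C has finite support, then M is injective in Mod-B if and only if M is injective in C. -/
/-!
Statement 10.  Let `r` be an exact preradical on the category of (right) `B`-modules
associated to a closed subcategory `C`, with `a = r B` admitting a set of local units.
If `M ∈ C` has finite support, then `M` is injective in the category of all
`B`-modules if and only if `M` is injective in `C`.  (Formalized for left modules,
the mirror image.)
-/

universe u

open DirectSum

variable {B : Type u} [Ring B]

/-- `E` is an injective object of the closed subcategory `C`. -/
def InjectiveIn (C : ClosedSubcategory B) (E : Type u) [AddCommGroup E] [Module B E] : Prop :=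
  ∀ (M N : Type u) [AddCommGroup M] [Module B M] [AddCommGroup N] [Module B N],
    C.Mem M → C.Mem N → ∀ (f : M →ₗ[B] N), Function.Injective f →
      ∀ g : M →ₗ[B] E, ∃ h : N →ₗ[B] E, ∀ m, h (f m) = g m

/-!
Only injectivity in `C` ⇒ injectivity needs an argument. Embed `M` in an injective module and
divide out a submodule maximal among those meeting `M` trivially: this gives an essential
extension `M ⊆ Q`. Since `M ∈ C` we have `M ⊆ r Q`, injectivity of `M` in `C` splits this
inclusion, and essentiality forces `r Q = M`. The finitely many idempotents of the support yield
`w ∈ a` acting as the identity on `M` and commuting with all local units; for `y ∈ Q` the element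
`y - w • y` is then killed by `a`, and essentiality again forces `y = w • y ∈ M`. Hence `M = Q`
is a retract of an injective module.
-/

universe v

open LinearMap Submodule

theorem Submodule.exists_mem_mul_eq_of_isIdempotentElem (I : Submodule B B)
    (F : Finset B) (hFI : ∀ e ∈ F, e ∈ I) (hidem : ∀ e ∈ F, IsIdempotentElem e)
    (hcomm : (F : Set B).Pairwise Commute) :
    ∃ w ∈ I, (∀ e ∈ F, w * e = e) ∧ ∀ x, (∀ e ∈ F, Commute x e) → Commute x w := by
  classical
  induction F using Finset.induction_on with
  | empty => exact ⟨0, I.zero_mem, by simp, fun x _ => Commute.zero_right x⟩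
  | insert a s ha ih =>
    obtain ⟨w, hwI, hws, hwc⟩ := ih (fun e he => hFI e (Finset.mem_insert_of_mem he))
      (fun e he => hidem e (Finset.mem_insert_of_mem he)) (hcomm.mono (by simp))
    have hcomm_a : ∀ e ∈ s, Commute a e := fun e he =>
      hcomm (by simp) (by simp [he]) (by rintro rfl; exact ha he)
    have haI : a ∈ I := hFI a (Finset.mem_insert_self a s)
    refine ⟨w + a - w * a, I.sub_mem (I.add_mem hwI haI) (I.smul_mem w haI), ?_, ?_⟩
    · intro e he
      rcases Finset.mem_insert.1 he with rfl | he
      · rw [sub_mul, add_mul, mul_assoc, (hidem e he).eq, add_sub_cancel_left]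
      · rw [sub_mul, add_mul, mul_assoc, (hcomm_a e he).eq, ← mul_assoc, hws e he,
          add_sub_cancel_right]
    · intro x hx
      have hxw := hwc x fun e he => hx e (Finset.mem_insert_of_mem he)
      have hxa := hx a (Finset.mem_insert_self a s)
      exact (hxw.add_right hxa).sub_right (hxw.mul_right hxa)

theorem exists_maximal_disjoint {α : Type*} [CompleteLattice α] [IsCompactlyGenerated α]
    (a : α) : ∃ b, Maximal (Disjoint · a) b :=
  zorn_le₀ _ fun c hc hchain =>
    ⟨sSup c, hchain.directedOn.disjoint_sSup_left.2 fun _ hb => hc hb, fun _ => le_sSup⟩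

namespace Submodule

variable {M Q : Type*} [AddCommGroup M] [Module B M] [AddCommGroup Q] [Module B Q]

def IsEssential (K : Submodule B Q) : Prop :=
  ∀ z : Q, z ≠ 0 → ∃ b : B, b • z ∈ K ∧ b • z ≠ 0

theorem isEssential_map_mkQ_of_maximal_disjoint {K N : Submodule B Q}
    (hN : Maximal (Disjoint · K) N) : (K.map N.mkQ).IsEssential := by
  intro z hz
  obtain ⟨y, rfl⟩ := N.mkQ_surjective z
  have hyN : y ∉ N := fun h => hz ((Quotient.mk_eq_zero N).2 h)
  have hnot : ¬ Disjoint (N ⊔ span B {y}) K := fun h =>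
    hyN (hN.2 h le_sup_left (mem_sup_right (mem_span_singleton_self y)))
  obtain ⟨x, hxy, hxK, hx0⟩ : ∃ x ∈ N ⊔ span B {y}, x ∈ K ∧ x ≠ 0 := by
    simpa [disjoint_def] using hnot
  obtain ⟨n, hn, _, hby, rfl⟩ := mem_sup.1 hxy
  obtain ⟨b, rfl⟩ := mem_span_singleton.1 hby
  have hmk : N.mkQ (n + b • y) = b • N.mkQ y := by
    rw [map_add, map_smul, mkQ_apply N n, (Quotient.mk_eq_zero N).2 hn, zero_add]
  refine ⟨b, hmk ▸ mem_map_of_mem hxK, fun h => hx0 ?_⟩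
  rw [← map_smul, mkQ_apply, Quotient.mk_eq_zero] at h
  exact disjoint_def.1 hN.1 _ (N.add_mem hn h) hxK

theorem exists_injective_mkQ_comp_isEssential {X : Type*} [AddCommGroup X] [Module B X]
    (j : M →ₗ[B] X) (hj : Function.Injective j) :
    ∃ N : Submodule B X,
      Function.Injective (N.mkQ ∘ₗ j) ∧ (range (N.mkQ ∘ₗ j)).IsEssential := by
  obtain ⟨N, hN⟩ := exists_maximal_disjoint (range j)
  refine ⟨N, (injective_iff_map_eq_zero _).2 fun m hm => hj ?_, ?_⟩
  · rw [comp_apply, mkQ_apply, Quotient.mk_eq_zero] at hm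
    rw [disjoint_def.1 hN.1 _ hm (mem_range_self j m), map_zero]
  · rw [range_comp]
    exact isEssential_map_mkQ_of_maximal_disjoint hN

/-- An essential submodule `range φ` is not a proper direct summand of any `L ⊇ range φ`. -/
theorem IsEssential.le_range_of_retraction {φ : M →ₗ[B] Q} (hφ : (range φ).IsEssential)
    {L : Submodule B Q} (hL : range φ ≤ L) (π : L →ₗ[B] M)
    (hπ : ∀ m, π ⟨φ m, hL (mem_range_self φ m)⟩ = m) : L ≤ range φ := by
  intro z hz
  let d : L := ⟨z, hz⟩ - ⟨φ (π ⟨z, hz⟩), hL (mem_range_self φ _)⟩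
  have hπd : π d = 0 := by simp only [d, map_sub, hπ, sub_self]
  suffices (d : Q) = 0 from ⟨π ⟨z, hz⟩, (sub_eq_zero.1 this).symm⟩
  by_contra hd
  obtain ⟨b, ⟨m, hm⟩, hb⟩ := hφ _ hd
  have hm0 : m = 0 := by
    calc m = π ⟨φ m, hL (mem_range_self φ m)⟩ := (hπ m).symm
      _ = π (b • d) := congrArg π (Subtype.ext hm)
      _ = 0 := by rw [map_smul, hπd, smul_zero]
  exact hb (by rw [← hm, hm0, map_zero])

end Submodule

theorem Module.Injective.injectiveIn (C : ClosedSubcategory B) {M : Type u} [AddCommGroup M]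
    [Module B M] (hM : Module.Injective B M) : InjectiveIn C M :=
  fun _ _ _ _ _ _ _ _ f hf g => hM.out f hf g

theorem Module.Injective.of_retraction {M X : Type v} [AddCommGroup M] [Module B M]
    [AddCommGroup X] [Module B X] [Module.Injective B X] (j : M →ₗ[B] X) (ρ : X →ₗ[B] M)
    (hρ : ∀ m, ρ (j m) = m) : Module.Injective B M where
  out _ _ _ _ _ _ f hf g := by
    obtain ⟨h, hh⟩ := Module.Injective.out f hf (j ∘ₗ g)
    exact ⟨ρ ∘ₗ h, fun x => by rw [comp_apply, hh, comp_apply, hρ]⟩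

theorem Module.exists_injective_into_injective (M : Type u) [AddCommGroup M] [Module B M] :
    ∃ (X : Type u) (_ : AddCommGroup X) (_ : Module B X) (_ : Module.Injective B X)
      (j : M →ₗ[B] X), Function.Injective j := by
  let X := CategoryTheory.Injective.under (ModuleCat.of B M)
  have : CategoryTheory.Injective (ModuleCat.of B X) :=
    inferInstanceAs (CategoryTheory.Injective X)
  exact ⟨X, inferInstance, inferInstance, Module.injective_module_of_injective_object B X,
    (CategoryTheory.Injective.ι (ModuleCat.of B M)).hom,
    (ModuleCat.mono_iff_injective _).1 inferInstance⟩

structure ClosedSubcategory.IsAssociatedPreradical_s10 (C : ClosedSubcategory B)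
    (r : ∀ (M : Type u) [AddCommGroup M] [Module B M], Submodule B M) : Prop where
  mem : ∀ (M : Type u) [AddCommGroup M] [Module B M], C.Mem (r M)
  le : ∀ (M : Type u) [AddCommGroup M] [Module B M] (N : Submodule B M), C.Mem N → N ≤ r M

namespace ClosedSubcategory.IsAssociatedPreradical_s10

variable {C : ClosedSubcategory B}
  {r : ∀ (M : Type u) [AddCommGroup M] [Module B M], Submodule B M}
  {M Q : Type u} [AddCommGroup M] [Module B M] [AddCommGroup Q] [Module B Q]

theorem range_le (hr : C.IsAssociatedPreradical_s10 r) (hM : C.Mem M) (f : M →ₗ[B] Q) :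
    range f ≤ r Q :=
  hr.le Q _ (C.mem_congr f.quotKerEquivRange (C.mem_quotient _ hM))

theorem smul_mem (hr : C.IsAssociatedPreradical_s10 r) {x : B} (hx : x ∈ r B) (y : Q) :
    x • y ∈ r Q :=
  hr.range_le (hr.mem B) (toSpanSingleton B Q y ∘ₗ (r B).subtype) ⟨⟨x, hx⟩, rfl⟩

theorem le_range_of_isEssential (hr : C.IsAssociatedPreradical_s10 r) (hM : C.Mem M)
    (hinj : InjectiveIn C M) {φ : M →ₗ[B] Q} (hφ : Function.Injective φ)
    (hess : (range φ).IsEssential) : r Q ≤ range φ := by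
  obtain ⟨π, hπ⟩ := hinj M (r Q) hM (hr.mem Q)
    (φ.codRestrict _ fun m => hr.range_le hM φ (mem_range_self φ m))
    (fun _ _ h => hφ (congrArg Subtype.val h)) LinearMap.id
  exact hess.le_range_of_retraction (hr.range_le hM φ) π hπ

/-- If `w ∈ a` fixes `K ⊇ r Q`, then `y - w • y` is killed by every local unit, hence by
all of `a`; essentiality of `K` then forces `y = w • y ∈ K`. -/
theorem eq_top_of_isEssential (hr : C.IsAssociatedPreradical_s10 r) {K : Submodule B Q}
    (hess : K.IsEssential) (hrK : r Q ≤ K)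
    {E : Set B} (hEa : E ⊆ r B) (hlocal : ∀ x ∈ r B, ∃ e ∈ E, x * e = x)
    {w : B} (hw : w ∈ r B) (hwE : ∀ e ∈ E, Commute e w) (hwK : ∀ x ∈ K, w • x = x) :
    K = ⊤ := by
  refine eq_top_iff.2 fun y _ => ?_
  have hwy : w • y ∈ K := hrK (hr.smul_mem hw y)
  suffices y - w • y = 0 by rwa [sub_eq_zero.1 this]
  have hEd : ∀ e ∈ E, e • (y - w • y) = 0 := fun e he => by
    rw [smul_sub, ← mul_smul, (hwE e he).eq, mul_smul,
      hwK _ (hrK (hr.smul_mem (hEa he) y)), sub_self]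
  by_contra hd
  obtain ⟨b, hbK, hb0⟩ := hess _ hd
  obtain ⟨e, he, hwbe⟩ := hlocal (w * b) (hr.smul_mem hw b)
  apply hb0
  calc b • (y - w • y) = (w * b) • (y - w • y) := by rw [mul_smul, hwK _ hbK]
    _ = (w * b * e) • (y - w • y) := by rw [hwbe]
    _ = 0 := by rw [mul_smul, hEd e he, smul_zero]

end ClosedSubcategory.IsAssociatedPreradical_s10

theorem stmt10_general (C : ClosedSubcategory B)
    (r : ∀ (M : Type u) [AddCommGroup M] [Module B M], Submodule B M)
    (hmem : ∀ (M : Type u) [AddCommGroup M] [Module B M], C.Mem (r M))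
    (hmax : ∀ (M : Type u) [AddCommGroup M] [Module B M] (N : Submodule B M),
      C.Mem N → N ≤ r M)
    -- `a = r B` admits a set `E` of commuting idempotent local units:
    (E : Set B) (hEa : E ⊆ (r B : Set B))
    (hcomm : ∀ e ∈ E, ∀ f ∈ E, e * f = f * e)
    (hidem : ∀ e ∈ E, e * e = e)
    (hlocal : ∀ x ∈ r B, ∃ e ∈ E, x * e = x ∧ e * x = x)
    -- `M ∈ C` has finite support:
    (M : Type u) [AddCommGroup M] [Module B M] (hM : C.Mem M)
    (F : Finset B) (hF : (F : Set B) ⊆ E)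
    (hsupp : ∀ m : M, (∑ e ∈ F, e) • m = m) :
    Module.Injective B M ↔ InjectiveIn C M := by
  refine ⟨Module.Injective.injectiveIn C, fun hinj => ?_⟩
  have hr : C.IsAssociatedPreradical_s10 r := ⟨hmem, hmax⟩
  obtain ⟨w, hw, hwF, hwc⟩ := (r B).exists_mem_mul_eq_of_isIdempotentElem F
    (fun e he => hEa (hF he)) (fun e he => hidem e (hF he))
    (fun e he f hf _ => hcomm e (hF he) f (hF hf))
  have hwM (m : M) : w • m = m := by
    conv_lhs => rw [← hsupp m]
    rw [← mul_smul, Finset.mul_sum, Finset.sum_congr rfl hwF, hsupp]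
  obtain ⟨X, _, _, _, j, hj⟩ := Module.exists_injective_into_injective (B := B) M
  obtain ⟨N, hφ, hess⟩ := exists_injective_mkQ_comp_isEssential j hj
  have htop : range (N.mkQ ∘ₗ j) = ⊤ :=
    hr.eq_top_of_isEssential hess (hr.le_range_of_isEssential hM hinj hφ hess) hEa
      (fun x hx => (hlocal x hx).imp fun _ ⟨he, h, _⟩ => ⟨he, h⟩) hw
      (fun e he => hwc e fun f hf => hcomm e he f (hF hf))
      (by rintro _ ⟨m, rfl⟩; rw [← map_smul, hwM])
  let φ := LinearEquiv.ofBijective (N.mkQ ∘ₗ j) ⟨hφ, range_eq_top.1 htop⟩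
  exact Module.Injective.of_retraction j (φ.symm.toLinearMap ∘ₗ N.mkQ)
    fun m => φ.symm_apply_apply m

theorem stmt10 (C : ClosedSubcategory B)
    (r : ∀ (M : Type u) [AddCommGroup M] [Module B M], Submodule B M)
    (hmem : ∀ (M : Type u) [AddCommGroup M] [Module B M], C.Mem (r M))
    (hmax : ∀ (M : Type u) [AddCommGroup M] [Module B M] (N : Submodule B M),
      C.Mem N → N ≤ r M)
    (hexact : ∀ {M N : Type u} [AddCommGroup M] [Module B M] [AddCommGroup N] [Module B N]
      (f : M →ₗ[B] N), Function.Surjective f → (r M).map f = r N)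
    -- `a = r B` admits a set `E` of commuting idempotent local units:
    (E : Set B) (hEa : E ⊆ (r B : Set B))
    (hcomm : ∀ e ∈ E, ∀ f ∈ E, e * f = f * e)
    (hidem : ∀ e ∈ E, e * e = e)
    (hlocal : ∀ x ∈ r B, ∃ e ∈ E, x * e = x ∧ e * x = x)
    -- `M ∈ C` has finite support:
    (M : Type u) [AddCommGroup M] [Module B M] (hM : C.Mem M)
    (F : Finset B) (hF : (F : Set B) ⊆ E)
    (hsupp : ∀ m : M, (∑ e ∈ F, e) • m = m) :
    Module.Injective B M ↔ InjectiveIn C M :=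
  stmt10_general C r hmem hmax E hEa hcomm hidem hlocal M hM F hF hsupp
end

section
/- Let K be a commutative ring, G a group, and C = KG the K-coalgebra with basis G in which every group element is group-like (Δ(g) = g ⊗ g, ε(g) = 1). Then the rational functor of C is exact: for every left C*-module M, the rational submodule is Rat(M) = Σ_{g∈G} e_g·M where e_g ∈ C* is the projection onto the coefficient of g, and Rat preserves surjections of C*-modules. -/
/-!
Statement 17.  Let `K` be a commutative ring, `G` a group, and `C = KG` the
`K`-coalgebra with basis `G` in which every group element is group-like
(`Δ g = g ⊗ g`, `ε g = 1`).  Then the rational functor of `C` is exact: for every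
left `C*`-module `M` the rational submodule is `Rat M = ∑_{g∈G} e_g·M`, where
`e_g ∈ C*` is the projection onto the coefficient of `g`, and `Rat` preserves
surjections of `C*`-modules.
-/

universe u

open TensorProduct

variable (K : Type u) [CommRing K] (G : Type u) [Group G]

/-- The comultiplication of `KG`: every `g ∈ G` is group-like. -/
noncomputable def comulKG : (G →₀ K) →ₗ[K] ((G →₀ K) ⊗[K] (G →₀ K)) :=
  Finsupp.lsum K fun g =>
    LinearMap.toSpanSingleton K _ (Finsupp.single g (1 : K) ⊗ₜ[K] Finsupp.single g (1 : K))

/-- The counit of `KG`: `ε g = 1`. -/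
noncomputable def counitKG : (G →₀ K) →ₗ[K] K :=
  Finsupp.lsum K fun _ => LinearMap.id

/-- The convolution product on `C* = (KG)*`. -/
noncomputable def convKG (x y : Module.Dual K (G →₀ K)) : Module.Dual K (G →₀ K) :=
  (TensorProduct.lid K K).toLinearMap ∘ₗ (TensorProduct.map x y) ∘ₗ comulKG K G

/-- `e_g ∈ C*`, the projection onto the coefficient of `g`. -/
noncomputable def egKG (g : G) : Module.Dual K (G →₀ K) := Finsupp.lapply g

variable {K G}

/-- `m` is a rational element of a `C*`-module `(M, act)`. -/
def IsRationalKG {M : Type u} [AddCommGroup M] [Module K M]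
    (act : Module.Dual K (G →₀ K) →ₗ[K] M →ₗ[K] M) (m : M) : Prop :=
  ∃ (n : ℕ) (c : Fin n → (G →₀ K)) (m' : Fin n → M),
    ∀ x : Module.Dual K (G →₀ K), act x m = ∑ i, x (c i) • m' i

/-!
Since every `g ∈ G` is group-like, the convolution on `C*` is the pointwise product of
functions on `G`, so the `e_g` are orthogonal idempotents with `x * e_g = x(g) e_g`.
A rational `m` only sees the finitely many coefficients of its witnesses `c i`; on those,
`ε = ∑_{g ∈ S} e_g` for a finite `S ⊆ G`, whence `m = ε·m = ∑_{g ∈ S} e_g·m`. Conversely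
`e_g·m'` is rational, with witness `(g, e_g·m')`. Exactness follows because an equivariant
surjection maps `e_g·M` onto `e_g·N`.
-/

section Coalgebra

variable {K G : Type u} [CommRing K]

lemma convKG_apply_single (x y : Module.Dual K (G →₀ K)) (g : G) :
    convKG K G x y (Finsupp.single g 1) = x (Finsupp.single g 1) * y (Finsupp.single g 1) := by
  simp [convKG, comulKG]

lemma convKG_egKG (x : Module.Dual K (G →₀ K)) (g : G) :
    convKG K G x (egKG K G g) = x (Finsupp.single g 1) • egKG K G g := by
  refine Finsupp.lhom_ext' fun h => LinearMap.ext_ring ?_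
  rcases eq_or_ne h g with rfl | hne
  · simp [convKG_apply_single, egKG]
  · simp [convKG_apply_single, egKG, hne]

lemma counitKG_eq_sum_egKG {c : G →₀ K} {S : Finset G} (hS : c.support ⊆ S) :
    counitKG K G c = ∑ g ∈ S, egKG K G g c := by
  simp only [counitKG, egKG, Finsupp.lsum_apply, Finsupp.lapply_apply]
  exact Finsupp.sum_of_support_subset c hS _ fun _ _ => rfl

variable {M : Type u} [AddCommGroup M] [Module K M]
  (act : Module.Dual K (G →₀ K) →ₗ[K] M →ₗ[K] M)

/-- The rational submodule `Rat M`. -/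
def ratSubmodule : Submodule K M where
  carrier := {m | IsRationalKG act m}
  zero_mem' := ⟨0, Fin.elim0, Fin.elim0, by simp⟩
  add_mem' := by
    rintro m₁ m₂ ⟨n₁, c₁, m₁', h₁⟩ ⟨n₂, c₂, m₂', h₂⟩
    refine ⟨n₁ + n₂, Fin.append c₁ c₂, Fin.append m₁' m₂', fun x => ?_⟩
    simp [h₁ x, h₂ x, Fin.sum_univ_add]
  smul_mem' := by
    rintro k m ⟨n, c, m', h⟩
    refine ⟨n, c, fun i => k • m' i, fun x => ?_⟩
    simp only [map_smul, h x, Finset.smul_sum, smul_comm k]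

lemma isRationalKG_act_egKG (hact_mul : ∀ x y, act (convKG K G x y) = act x ∘ₗ act y)
    (g : G) (m : M) : IsRationalKG act (act (egKG K G g) m) := by
  refine ⟨1, fun _ => Finsupp.single g 1, fun _ => act (egKG K G g) m, fun x => ?_⟩
  rw [Fin.sum_univ_one, ← LinearMap.comp_apply, ← hact_mul, convKG_egKG, map_smul,
    LinearMap.smul_apply]

lemma IsRationalKG.eq_sum_act_egKG (hact_one : act (counitKG K G) = LinearMap.id) {m : M}
    (hm : IsRationalKG act m) : ∃ S : Finset G, m = ∑ g ∈ S, act (egKG K G g) m := by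
  classical
  obtain ⟨n, c, m', hc⟩ := hm
  refine ⟨Finset.univ.biUnion fun i => (c i).support, ?_⟩
  have hsupp (i : Fin n) : (c i).support ⊆ Finset.univ.biUnion fun i => (c i).support :=
    Finset.subset_biUnion_of_mem (fun i => (c i).support) (Finset.mem_univ i)
  calc m = act (counitKG K G) m := by rw [hact_one, LinearMap.id_apply]
    _ = act (∑ g ∈ Finset.univ.biUnion fun i => (c i).support, egKG K G g) m := by
      simp only [hc, counitKG_eq_sum_egKG (hsupp _), LinearMap.sum_apply]
    _ = _ := by rw [map_sum, LinearMap.sum_apply]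

theorem ratSubmodule_eq_span (hact_mul : ∀ x y, act (convKG K G x y) = act x ∘ₗ act y)
    (hact_one : act (counitKG K G) = LinearMap.id) :
    ratSubmodule act = Submodule.span K {z : M | ∃ (g : G) (m' : M), z = act (egKG K G g) m'} := by
  refine le_antisymm (fun m hm => ?_) (Submodule.span_le.2 ?_)
  · obtain ⟨S, hS⟩ := IsRationalKG.eq_sum_act_egKG act hact_one hm
    rw [hS]
    exact Submodule.sum_mem _ fun g _ => Submodule.subset_span ⟨g, m, rfl⟩
  · rintro _ ⟨g, m', rfl⟩
    exact isRationalKG_act_egKG act hact_mul g m'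

variable {N : Type u} [AddCommGroup N] [Module K N]
  (actN : Module.Dual K (G →₀ K) →ₗ[K] N →ₗ[K] N)

theorem map_ratSubmodule_eq (hact_mul : ∀ x y, act (convKG K G x y) = act x ∘ₗ act y)
    (hact_one : act (counitKG K G) = LinearMap.id)
    (hactN_mul : ∀ x y, actN (convKG K G x y) = actN x ∘ₗ actN y)
    (hactN_one : actN (counitKG K G) = LinearMap.id) (f : M →ₗ[K] N)
    (hf : ∀ x m, f (act x m) = actN x (f m)) (hsurj : Function.Surjective f) :
    (ratSubmodule act).map f = ratSubmodule actN := by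
  have himage : f '' {z | ∃ (g : G) (m' : M), z = act (egKG K G g) m'} =
      {z | ∃ (g : G) (n' : N), z = actN (egKG K G g) n'} := by
    ext z
    constructor
    · rintro ⟨_, ⟨g, m', rfl⟩, rfl⟩
      exact ⟨g, f m', hf _ _⟩
    · rintro ⟨g, n', rfl⟩
      obtain ⟨m', rfl⟩ := hsurj n'
      exact ⟨_, ⟨g, m', rfl⟩, hf _ _⟩
  rw [ratSubmodule_eq_span act hact_mul hact_one, ratSubmodule_eq_span actN hactN_mul hactN_one,
    Submodule.map_span, himage]

end Coalgebra

theorem stmt17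
    {M : Type u} [AddCommGroup M] [Module K M]
    (act : Module.Dual K (G →₀ K) →ₗ[K] M →ₗ[K] M)
    (hact_mul : ∀ x y, act (convKG K G x y) = (act x) ∘ₗ (act y))
    (hact_one : act (counitKG K G) = LinearMap.id)
    {N : Type u} [AddCommGroup N] [Module K N]
    (actN : Module.Dual K (G →₀ K) →ₗ[K] N →ₗ[K] N)
    (hactN_mul : ∀ x y, actN (convKG K G x y) = (actN x) ∘ₗ (actN y))
    (hactN_one : actN (counitKG K G) = LinearMap.id) :
    -- `Rat M = ∑_{g ∈ G} e_g · M` :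
    (∀ m : M, IsRationalKG act m ↔
      m ∈ Submodule.span K {z : M | ∃ (g : G) (m' : M), z = act (egKG K G g) m'}) ∧
    -- and `Rat` preserves surjections of `C*`-modules:
    (∀ f : M →ₗ[K] N, (∀ (x : Module.Dual K (G →₀ K)) (m : M), f (act x m) = actN x (f m)) →
      Function.Surjective f →
        ∀ n : N, IsRationalKG actN n → ∃ m : M, IsRationalKG act m ∧ f m = n) := by
  refine ⟨SetLike.ext_iff.1 (ratSubmodule_eq_span act hact_mul hact_one),
    fun f hf hsurj n hn => ?_⟩
  have hn' : n ∈ (ratSubmodule act).map f := by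
    rwa [map_ratSubmodule_eq act actN hact_mul hact_one hactN_mul hactN_one f hf hsurj]
  exact hn'
end
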